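/- arXiv:1405.4654 — 4 statements merged into one kernel-verified Lean document; each statement's English description precedes it below -/
import Mathlib

section
/- Let M be a Z_p-module and f ∈ End(M) nilpotent with f^d = 0, d < p. Then log(exp(f)) = f, where exp(f) = Σ_{k=0}^{p-1} f^k/k! and log(g) = Σ_{k=1}^{p-1} (-1)^{k+1}(g - id)^k/k. Hence truncated exp and log are mutually inverse bijections between nilpotent endomorphisms of index < p and automorphisms g with (g-id) nilpotent of index < p. -/
/-- Truncated exponential `∑_{k<p} f^k/k!` of an endomorphism of a `ℤ_[p]`-module. -/
noncomputable def texp (p : ℕ) [Fact p.Prime] {M : Type*} [AddCommGroup M] [Module ℤ_[p] M]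
    (f : Module.End ℤ_[p] M) : Module.End ℤ_[p] M :=
  ∑ k ∈ Finset.range p, Ring.inverse ((k.factorial : ℤ_[p])) • f ^ k

/-- Truncated logarithm `∑_{1≤k≤p-1} (-1)^{k+1}(g-1)^k/k`. -/
noncomputable def tlog (p : ℕ) [Fact p.Prime] {M : Type*} [AddCommGroup M] [Module ℤ_[p] M]
    (g : Module.End ℤ_[p] M) : Module.End ℤ_[p] M :=
  ∑ k ∈ Finset.Icc 1 (p - 1), ((-1 : ℤ_[p]) ^ (k + 1) * Ring.inverse ((k : ℤ_[p]))) • (g - 1) ^ k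

/-!
Over any commutative ring in which `1, …, n - 1` are invertible, put
`E = ∑_{k<n} X^k/k!` and `L = ∑_{1≤k<n} (-1)^{k+1} X^k/k`. Then `L(E - 1) ≡ X` and
`E(L) ≡ 1 + X` modulo `X^(n-1)`, and substituting an element `a` with `a^(n-1) = 0`
(resp. `(a - 1)^(n-1) = 0`) kills the error terms. The congruences come from the differential
equations `E' ≡ E` and `(1 + X) L' ≡ 1` modulo `X^(n-1)`: dividing by `1, …, m - 1`, a
polynomial with zero constant term is determined modulo `X^m`, `m ≤ n`, by its derivative
modulo `X^m`, and likewise by `(1 + X) P' - P`.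
-/

open Polynomial Finset
open scoped Nat

section

variable (R : Type*) [CommRing R] (n : ℕ)

noncomputable def truncExp : R[X] :=
  ∑ k ∈ range n, C (Ring.inverse (k ! : R)) * X ^ k

noncomputable def truncLog : R[X] :=
  ∑ k ∈ Icc 1 (n - 1), C ((-1) ^ (k + 1) * Ring.inverse (k : R)) * X ^ k

variable {R n}

lemma coeff_truncExp (k : ℕ) :
    (truncExp R n).coeff k = if k < n then Ring.inverse (k ! : R) else 0 := by
  simp [truncExp, finsetSum_coeff]

lemma coeff_truncLog (k : ℕ) :
    (truncLog R n).coeff k =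
      if 1 ≤ k ∧ k ≤ n - 1 then (-1) ^ (k + 1) * Ring.inverse (k : R) else 0 := by
  simp only [truncLog, finsetSum_coeff, coeff_C_mul_X_pow]
  simp

lemma coeff_zero_truncExp (hn : 0 < n) : (truncExp R n).coeff 0 = 1 := by
  simp [coeff_truncExp, hn]

lemma X_dvd_truncExp_sub_one (hn : 0 < n) : X ∣ truncExp R n - 1 := by
  simp [X_dvd_iff, coeff_zero_truncExp hn]

lemma X_dvd_truncLog : X ∣ truncLog R n := by
  simp [X_dvd_iff, coeff_truncLog]

lemma inverse_factorial_succ_mul {i : ℕ} (hi : IsUnit (i + 1 : R)) :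
    Ring.inverse ((i + 1)! : R) * (i + 1 : R) = Ring.inverse (i ! : R) := by
  rw [Nat.factorial_succ, Nat.cast_mul, Ring.mul_inverse_rev, Nat.cast_succ, mul_assoc,
    Ring.inverse_mul_cancel _ hi, mul_one]

lemma derivative_truncExp (hR : ∀ k : ℕ, 0 < k → k < n → IsUnit (k : R)) (hn : 0 < n) :
    derivative (truncExp R n) = truncExp R n - C (Ring.inverse ((n - 1)! : R)) * X ^ (n - 1) := by
  ext i
  rw [coeff_derivative, coeff_sub, coeff_C_mul_X_pow, coeff_truncExp, coeff_truncExp]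
  rcases lt_trichotomy (i + 1) n with hi | hi | hi
  · have hu : IsUnit (i + 1 : R) := mod_cast hR (i + 1) i.succ_pos hi
    simp [hi, show i < n by omega, show i ≠ n - 1 by omega, inverse_factorial_succ_mul hu]
  · subst hi
    simp
  · simp [show ¬ i < n by omega, show i ≠ n - 1 by omega, show ¬ i + 1 < n by omega]

lemma derivative_truncLog (hR : ∀ k : ℕ, 0 < k → k < n → IsUnit (k : R)) :
    derivative (truncLog R n) = ∑ j ∈ range (n - 1), (-X) ^ j := by
  have hC : ∀ j, (-X : R[X]) ^ j = C ((-1) ^ j) * X ^ j := fun j => by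
    rw [neg_pow (X : R[X]), ← C_1, ← C_neg, ← C_pow]
  ext i
  simp only [hC, coeff_derivative, coeff_truncLog, finsetSum_coeff, coeff_C_mul_X_pow]
  by_cases hi : i < n - 1
  · have hu : IsUnit (i + 1 : R) := mod_cast hR (i + 1) i.succ_pos (by omega)
    simp [hi, show i + 1 ≤ n - 1 by omega, mul_assoc, Ring.inverse_mul_cancel _ hu, pow_succ]
  · simp [hi, show ¬ i + 1 ≤ n - 1 by omega]

lemma one_add_X_mul_derivative_truncLog (hR : ∀ k : ℕ, 0 < k → k < n → IsUnit (k : R)) :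
    (1 + X) * derivative (truncLog R n) = 1 - (-X) ^ (n - 1) := by
  rw [derivative_truncLog hR, ← mul_neg_geom_sum, sub_neg_eq_add]

lemma coeff_zero_comp (P Q : R[X]) : (P.comp Q).coeff 0 = P.eval (Q.coeff 0) := by
  rw [coeff_zero_eq_eval_zero, eval_comp, coeff_zero_eq_eval_zero]

lemma coeff_succ_eq_zero_of_coeff_derivative {P : R[X]} {j : ℕ} (hj : IsUnit (j + 1 : R))
    (h : (derivative P).coeff j = 0) : P.coeff (j + 1) = 0 := by
  rwa [coeff_derivative, hj.mul_left_eq_zero] at h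

lemma X_pow_dvd_of_X_pow_dvd_derivative (hR : ∀ k : ℕ, 0 < k → k < n → IsUnit (k : R))
    {P : R[X]} {m : ℕ} (hm : m ≤ n) (h0 : P.coeff 0 = 0) (h : X ^ m ∣ derivative P) :
    X ^ m ∣ P := by
  rw [X_pow_dvd_iff] at h ⊢
  rintro (_ | j) hj
  · exact h0
  · exact coeff_succ_eq_zero_of_coeff_derivative (mod_cast hR (j + 1) j.succ_pos (by omega))
      (h j (by omega))

lemma X_pow_dvd_of_X_pow_dvd_one_add_X_mul_derivative_sub
    (hR : ∀ k : ℕ, 0 < k → k < n → IsUnit (k : R))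
    {P : R[X]} {m : ℕ} (hm : m ≤ n) (h0 : P.coeff 0 = 0)
    (h : X ^ m ∣ (1 + X) * derivative P - P) : X ^ m ∣ P := by
  rw [X_pow_dvd_iff] at h ⊢
  intro i hi
  induction i with
  | zero => exact h0
  | succ j ih =>
    have hPj : P.coeff j = 0 := ih (by omega)
    have hXP : (X * derivative P).coeff j = 0 := by
      cases j with
      | zero => simp
      | succ j => rw [coeff_X_mul, coeff_derivative, hPj, zero_mul]
    refine coeff_succ_eq_zero_of_coeff_derivative (mod_cast hR (j + 1) j.succ_pos (by omega)) ?_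
    simpa [add_mul, hXP, hPj] using h j (by omega)

lemma X_pow_dvd_truncLog_comp_truncExp_sub_one_sub_X
    (hR : ∀ k : ℕ, 0 < k → k < n → IsUnit (k : R)) (hn : 0 < n) :
    X ^ (n - 1) ∣ (truncLog R n).comp (truncExp R n - 1) - X := by
  set W := truncExp R n - 1
  have hW : X ∣ W := X_dvd_truncExp_sub_one hn
  have hgeom : (1 + W) * (derivative (truncLog R n)).comp W = 1 - (-W) ^ (n - 1) := by
    simpa using congrArg (·.comp W) (one_add_X_mul_derivative_truncLog hR)
  have hderiv : derivative ((truncLog R n).comp W - X) =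
      -(-W) ^ (n - 1) - C (Ring.inverse ((n - 1)! : R)) * X ^ (n - 1) *
        (derivative (truncLog R n)).comp W := by
    rw [derivative_sub, derivative_comp, derivative_X, derivative_sub, derivative_one, sub_zero,
      derivative_truncExp hR hn]
    linear_combination hgeom
  refine X_pow_dvd_of_X_pow_dvd_derivative hR (Nat.sub_le n 1) ?_ ?_
  · simp [W, coeff_zero_comp, coeff_zero_truncExp hn, ← coeff_zero_eq_eval_zero, coeff_truncLog]
  · rw [hderiv]
    exact dvd_sub (pow_dvd_pow_of_dvd (dvd_neg.mpr hW) _).neg_right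
      ((dvd_mul_left _ _).mul_right _)

lemma X_pow_dvd_truncExp_comp_truncLog_sub_one_add_X
    (hR : ∀ k : ℕ, 0 < k → k < n → IsUnit (k : R)) (hn : 0 < n) :
    X ^ (n - 1) ∣ (truncExp R n).comp (truncLog R n) - (1 + X) := by
  set L := truncLog R n
  set G := (truncExp R n).comp L - (1 + X)
  set c := Ring.inverse ((n - 1)! : R)
  have hrec : (1 + X) * derivative G - G =
      -(C c * L ^ (n - 1)) - (G + 1 + X - C c * L ^ (n - 1)) * (-X) ^ (n - 1) := by
    have hE : (derivative (truncExp R n)).comp L = G + 1 + X - C c * L ^ (n - 1) := by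
      simp only [derivative_truncExp hR hn, sub_comp, mul_comp, C_comp, X_pow_comp, G]
      ring
    have hG : derivative G = (derivative (truncExp R n)).comp L * derivative L - 1 := by
      simp [G, derivative_comp, mul_comm]
    rw [hG, hE]
    linear_combination (G + 1 + X - C c * L ^ (n - 1)) * one_add_X_mul_derivative_truncLog hR
  refine X_pow_dvd_of_X_pow_dvd_one_add_X_mul_derivative_sub hR (Nat.sub_le n 1) ?_ ?_
  · simp [G, L, coeff_zero_comp, coeff_truncLog, ← coeff_zero_eq_eval_zero,
      coeff_zero_truncExp hn]
  · rw [hrec]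
    exact dvd_sub ((pow_dvd_pow_of_dvd X_dvd_truncLog _).mul_left _).neg_right
      ((pow_dvd_pow_of_dvd (dvd_neg.mpr dvd_rfl) _).mul_left _)

variable {A : Type*} [Ring A] [Algebra R A]

lemma aeval_eq_of_X_pow_dvd_sub {P Q : R[X]} {m : ℕ} (h : X ^ m ∣ P - Q) {a : A}
    (ha : a ^ m = 0) : aeval a P = aeval a Q := by
  obtain ⟨S, hS⟩ := h
  rw [← sub_eq_zero, ← map_sub, hS, map_mul, map_pow, aeval_X, ha, zero_mul]

lemma aeval_truncLog_aeval_truncExp (hR : ∀ k : ℕ, 0 < k → k < n → IsUnit (k : R))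
    (hn : 0 < n) {a : A} (ha : a ^ (n - 1) = 0) :
    aeval (aeval a (truncExp R n) - 1) (truncLog R n) = a := by
  rw [← aeval_one (R := R) a, ← map_sub, ← aeval_comp,
    aeval_eq_of_X_pow_dvd_sub (X_pow_dvd_truncLog_comp_truncExp_sub_one_sub_X hR hn) ha, aeval_X]

lemma aeval_truncExp_aeval_truncLog (hR : ∀ k : ℕ, 0 < k → k < n → IsUnit (k : R))
    (hn : 0 < n) {a : A} (ha : (a - 1) ^ (n - 1) = 0) :
    aeval (aeval (a - 1) (truncLog R n)) (truncExp R n) = a := by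
  rw [← aeval_comp,
    aeval_eq_of_X_pow_dvd_sub (X_pow_dvd_truncExp_comp_truncLog_sub_one_add_X hR hn) ha]
  simp

lemma aeval_truncExp_sub_one_pow (hn : 0 < n) {a : A} (ha : a ^ (n - 1) = 0) :
    (aeval a (truncExp R n) - 1) ^ (n - 1) = 0 := by
  rw [← aeval_one (R := R) a, ← map_sub, ← map_pow, aeval_eq_of_X_pow_dvd_sub (Q := 0) _ ha,
    map_zero]
  simpa using pow_dvd_pow_of_dvd (X_dvd_truncExp_sub_one hn) _

lemma aeval_truncLog_pow {a : A} (ha : (a - 1) ^ (n - 1) = 0) :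
    aeval (a - 1) (truncLog R n) ^ (n - 1) = 0 := by
  rw [← map_pow, aeval_eq_of_X_pow_dvd_sub (Q := 0) _ ha, map_zero]
  simpa using pow_dvd_pow_of_dvd X_dvd_truncLog _

end

namespace PadicInt

variable {p : ℕ} [hp : Fact p.Prime]

lemma isUnit_natCast_of_pos_of_lt {k : ℕ} (h0 : 0 < k) (hk : k < p) : IsUnit (k : ℤ_[p]) := by
  rw [isUnit_iff, norm_natCast_eq_one_iff]
  exact Nat.coprime_of_lt_prime h0.ne' hk hp.out

variable {M : Type*} [AddCommGroup M] [Module ℤ_[p] M]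

lemma texp_eq_aeval (f : Module.End ℤ_[p] M) : texp p f = aeval f (truncExp ℤ_[p] p) := by
  simp [texp, truncExp, Algebra.smul_def]

lemma tlog_eq_aeval (g : Module.End ℤ_[p] M) : tlog p g = aeval (g - 1) (truncLog ℤ_[p] p) := by
  simp [tlog, truncLog, Algebra.smul_def]

end PadicInt

section

open PadicInt

variable {p : ℕ} [hp : Fact p.Prime] {M : Type*} [AddCommGroup M] [Module ℤ_[p] M]

lemma tlog_texp {f : Module.End ℤ_[p] M} (hf : f ^ (p - 1) = 0) : tlog p (texp p f) = f := by
  rw [tlog_eq_aeval, texp_eq_aeval]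
  exact aeval_truncLog_aeval_truncExp (fun _ => isUnit_natCast_of_pos_of_lt) hp.out.pos hf

lemma texp_tlog {g : Module.End ℤ_[p] M} (hg : (g - 1) ^ (p - 1) = 0) :
    texp p (tlog p g) = g := by
  rw [tlog_eq_aeval, texp_eq_aeval]
  exact aeval_truncExp_aeval_truncLog (fun _ => isUnit_natCast_of_pos_of_lt) hp.out.pos hg

lemma texp_sub_one_pow {f : Module.End ℤ_[p] M} (hf : f ^ (p - 1) = 0) :
    (texp p f - 1) ^ (p - 1) = 0 := by
  rw [texp_eq_aeval]
  exact aeval_truncExp_sub_one_pow hp.out.pos hf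

lemma tlog_pow {g : Module.End ℤ_[p] M} (hg : (g - 1) ^ (p - 1) = 0) :
    tlog p g ^ (p - 1) = 0 := by
  rw [tlog_eq_aeval]
  exact aeval_truncLog_pow hg

end

/-- `log(exp(f)) = f` for `f` nilpotent with `f^d = 0`, `d < p`; hence truncated `exp` and
`log` are mutually inverse bijections between nilpotent endomorphisms of index `< p` and
automorphisms `g` with `g - id` nilpotent of index `< p`. -/
theorem stmt4 {p : ℕ} [Fact p.Prime] {M : Type*} [AddCommGroup M] [Module ℤ_[p] M]
    (f : Module.End ℤ_[p] M) (d : ℕ) (hd : d < p) (hf : f ^ d = 0) :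
    tlog p (texp p f) = f ∧
    Set.BijOn (texp p) {h : Module.End ℤ_[p] M | h ^ (p - 1) = 0}
      {g : Module.End ℤ_[p] M | (g - 1) ^ (p - 1) = 0} ∧
    Set.BijOn (tlog p) {g : Module.End ℤ_[p] M | (g - 1) ^ (p - 1) = 0}
      {h : Module.End ℤ_[p] M | h ^ (p - 1) = 0} ∧
    Set.InvOn (tlog p) (texp p) {h : Module.End ℤ_[p] M | h ^ (p - 1) = 0}
      {g : Module.End ℤ_[p] M | (g - 1) ^ (p - 1) = 0} := by
  have hinv : Set.InvOn (tlog p) (texp p) {h : Module.End ℤ_[p] M | h ^ (p - 1) = 0}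
      {g : Module.End ℤ_[p] M | (g - 1) ^ (p - 1) = 0} :=
    ⟨fun _ => tlog_texp, fun _ => texp_tlog⟩
  have hexp : Set.MapsTo (texp p) {h : Module.End ℤ_[p] M | h ^ (p - 1) = 0}
      {g : Module.End ℤ_[p] M | (g - 1) ^ (p - 1) = 0} := fun _ => texp_sub_one_pow
  have hlog : Set.MapsTo (tlog p) {g : Module.End ℤ_[p] M | (g - 1) ^ (p - 1) = 0}
      {h : Module.End ℤ_[p] M | h ^ (p - 1) = 0} := fun _ => tlog_pow
  exact ⟨tlog_texp (pow_eq_zero_of_le (by omega) hf), hinv.bijOn hexp hlog,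
    hinv.symm.bijOn hlog hexp, hinv⟩
end

section
/- Let f, g be commuting nilpotent endomorphisms of a Z_p-module M with f^a = 0, g^b = 0 and a + b ≤ p. Then exp(f + g) = exp(f) ∘ exp(g), where exp denotes the truncated exponential Σ_{k=0}^{p-1} (·)^k/k!. -/
lemma isUnit_fact_padic {p : ℕ} [Fact p.Prime] {k : ℕ} (hk : k < p) :
    IsUnit ((k.factorial : ℤ_[p])) := by
  rw [PadicInt.isUnit_iff]
  have h1 : ‖((k.factorial : ℤ) : ℤ_[p])‖ ≤ 1 := PadicInt.norm_le_one _
  have h2 : ¬ ‖((k.factorial : ℤ) : ℤ_[p])‖ < 1 := by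
    rw [PadicInt.norm_int_lt_one_iff_dvd]
    have : ¬ (p ∣ k.factorial) := by
      intro h
      exact absurd ((Nat.Prime.dvd_factorial (Fact.out)).mp h) (by omega)
    exact_mod_cast this
  push_cast at h1 h2 ⊢
  linarith

lemma inv_fact_mul_choose {p : ℕ} [Fact p.Prime] {i k : ℕ} (hik : i ≤ k) (hk : k < p) :
    Ring.inverse ((k.factorial : ℤ_[p])) * (k.choose i : ℤ_[p]) =
      Ring.inverse ((i.factorial : ℤ_[p])) * Ring.inverse (((k - i).factorial : ℤ_[p])) := by
  have hA := isUnit_fact_padic (p := p) hk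
  have hB := isUnit_fact_padic (p := p) (lt_of_le_of_lt hik hk)
  have hC := isUnit_fact_padic (p := p) (lt_of_le_of_lt (Nat.sub_le k i) hk)
  have hkey : (k.choose i : ℤ_[p]) * (i.factorial : ℤ_[p]) * ((k - i).factorial : ℤ_[p])
      = (k.factorial : ℤ_[p]) := by
    have h := Nat.choose_mul_factorial_mul_factorial hik
    exact_mod_cast congrArg (Nat.cast (R := ℤ_[p])) h
  apply hA.mul_left_cancel
  rw [← mul_assoc, Ring.mul_inverse_cancel _ hA, one_mul]
  have hB1 : (i.factorial : ℤ_[p]) * Ring.inverse ((i.factorial : ℤ_[p])) = 1 :=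
    Ring.mul_inverse_cancel _ hB
  have hC1 : ((k - i).factorial : ℤ_[p]) * Ring.inverse (((k - i).factorial : ℤ_[p])) = 1 :=
    Ring.mul_inverse_cancel _ hC
  rw [← hkey]
  linear_combination (-(k.choose i : ℤ_[p]) * ((k - i).factorial : ℤ_[p]) *
    Ring.inverse (((k - i).factorial : ℤ_[p]))) * hB1 - (k.choose i : ℤ_[p]) * hC1


/-- For commuting nilpotent endomorphisms with `f^a = 0`, `g^b = 0`, `a + b ≤ p`,
`exp(f + g) = exp(f) ∘ exp(g)`. -/
theorem stmt5 {p : ℕ} [Fact p.Prime] {M : Type*} [AddCommGroup M] [Module ℤ_[p] M]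
    (f g : Module.End ℤ_[p] M) (hfg : Commute f g) (a b : ℕ)
    (hf : f ^ a = 0) (hg : g ^ b = 0) (hab : a + b ≤ p) :
    texp p (f + g) = texp p f * texp p g := by
  set F : ℕ → Module.End ℤ_[p] M := fun i => Ring.inverse ((i.factorial : ℤ_[p])) • f ^ i with hF
  set G : ℕ → Module.End ℤ_[p] M := fun j => Ring.inverse ((j.factorial : ℤ_[p])) • g ^ j with hG
  have hzero : ∀ i j : ℕ, p ≤ i + j → F i * G j = 0 := by
    intro i j hij
    rcases le_or_gt a i with hai | hai
    · have : f ^ i = 0 := pow_eq_zero_of_le hai hf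
      simp [hF, this]
    · have hbj : b ≤ j := by omega
      have : g ^ j = 0 := pow_eq_zero_of_le hbj hg
      simp [hG, this]
  have hterm : ∀ k : ℕ, k < p →
      Ring.inverse ((k.factorial : ℤ_[p])) • (f + g) ^ k
        = ∑ i ∈ Finset.range (k + 1), F i * G (k - i) := by
    intro k hk
    rw [hfg.add_pow, Finset.smul_sum]
    refine Finset.sum_congr rfl fun i hi => ?_
    have hik : i ≤ k := by simpa using Nat.lt_succ_iff.mp (Finset.mem_range.mp hi)
    have hcast : f ^ i * g ^ (k - i) * (k.choose i : Module.End ℤ_[p] M)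
        = (k.choose i : ℤ_[p]) • (f ^ i * g ^ (k - i)) := by
      rw [← (Nat.cast_commute (k.choose i) (f ^ i * g ^ (k - i))).eq, ← nsmul_eq_mul,
        ← Nat.cast_smul_eq_nsmul ℤ_[p]]
    rw [hcast, smul_smul, inv_fact_mul_choose hik hk, hF, hG]
    simp only [smul_mul_smul_comm]
  have h1 : texp p (f + g) = ∑ k ∈ Finset.range p, ∑ i ∈ Finset.range (k + 1), F i * G (k - i) :=
    Finset.sum_congr rfl fun k hk => hterm k (Finset.mem_range.mp hk)
  rw [h1]
  rw [Finset.sum_comm' (t' := Finset.range p) (s' := fun i => Finset.Ico i p)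
    (by intro k i; simp only [Finset.mem_range, Finset.mem_Ico, Nat.lt_succ_iff]; omega)]
  have h2 : ∀ i ∈ Finset.range p, ∑ k ∈ Finset.Ico i p, F i * G (k - i)
      = ∑ j ∈ Finset.range p, F i * G j := by
    intro i hi
    rw [Finset.sum_Ico_eq_sum_range]
    simp only [Nat.add_sub_cancel_left]
    refine Finset.sum_subset (Finset.range_subset_range.mpr (by omega)) ?_
    intro j hj hj'
    exact hzero i j (by simp only [Finset.mem_range] at hj hj'; omega)
  rw [Finset.sum_congr rfl h2, texp, texp, Finset.sum_mul_sum]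
end

section
/- Let G be a group acting on a Z_p-module M via φ: G → Aut(M), with the action of length d < p (i.e. [M, _d G] = 0). Suppose additionally the group operation and truncated log are compatible so that log(φ): G → End(M), g ↦ Σ_{k=1}^{p-1} (-1)^{k+1}(φ(g)-id)^k/k is defined. Then for every G-invariant submodule U of M, one has log(φ)(g)(U) ⊆ [U, G] for all g ∈ G. Consequently [M, _i log(G)] ⊆ [M, _i G] for all i ≥ 1, where [M, log(G)] = Span{log(φ)(g)(m)}. -/
/-- `[U, G] = Span{m - g·m : m ∈ U, g ∈ G}`. -/
noncomputable def grBr (p : ℕ) [Fact p.Prime] {M G : Type*} [AddCommGroup M] [Module ℤ_[p] M] [Group G]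
    (φ : G →* (M ≃ₗ[ℤ_[p]] M)) (U : Submodule ℤ_[p] M) : Submodule ℤ_[p] M :=
  Submodule.span ℤ_[p] {x | ∃ g : G, ∃ m ∈ U, x = m - φ g m}

/-- Iterated `[M, _i G]`, with `[M, _0 G] = M`. -/
noncomputable def grIter (p : ℕ) [Fact p.Prime] {M G : Type*} [AddCommGroup M] [Module ℤ_[p] M] [Group G]
    (φ : G →* (M ≃ₗ[ℤ_[p]] M)) : ℕ → Submodule ℤ_[p] M
  | 0 => ⊤
  | (i+1) => grBr p φ (grIter p φ i)


/-- `[U, log(G)] = Span{log(φ(g))·m : m ∈ U, g ∈ G}`. -/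
noncomputable def logBr (p : ℕ) [Fact p.Prime] {M G : Type*} [AddCommGroup M] [Module ℤ_[p] M]
    [Group G] (φ : G →* (M ≃ₗ[ℤ_[p]] M)) (U : Submodule ℤ_[p] M) : Submodule ℤ_[p] M :=
  Submodule.span ℤ_[p] {x | ∃ g : G, ∃ m ∈ U, x = tlog p (φ g).toLinearMap m}

/-- Iterated `[M, _i log(G)]`. -/
noncomputable def logIter (p : ℕ) [Fact p.Prime] {M G : Type*} [AddCommGroup M] [Module ℤ_[p] M]
    [Group G] (φ : G →* (M ≃ₗ[ℤ_[p]] M)) : ℕ → Submodule ℤ_[p] M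
  | 0 => ⊤
  | (i+1) => logBr p φ (logIter p φ i)

/-!
Each term `(φ g - 1)^k`, `k ≥ 1`, of the truncated logarithm maps a `G`-invariant submodule `U`
into `[U, G]`: the factor `(φ g - 1)^(k-1)` keeps `U`, and `φ g - 1` sends `U` into `[U, G]`.
Moreover `[U, G]` is again `G`-invariant for every `U`, because
`h (m - k m) = (m - (h k) m) - (m - h m)`, so the inclusions `[M, _i log(G)] ⊆ [M, _i G]`
follow by induction on `i`.
-/

section SubOnePow

variable {R M : Type*} [Ring R] [AddCommGroup M] [Module R M]
  {f : Module.End R M} {U N : Submodule R M}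

theorem Module.End.sub_one_pow_apply_mem (hU : ∀ m ∈ U, f m ∈ U) (hN : ∀ m ∈ U, f m - m ∈ N)
    {k : ℕ} (hk : k ≠ 0) {m : M} (hm : m ∈ U) : ((f - 1) ^ k) m ∈ N := by
  obtain ⟨k, rfl⟩ := Nat.exists_eq_succ_of_ne_zero hk
  have hsub : ∀ x ∈ U, (f - 1) x ∈ U := fun x hx => by
    simpa using sub_mem (hU x hx) hx
  rw [pow_succ', Module.End.mul_apply]
  simpa using hN _ (Module.End.pow_apply_mem_of_forall_mem k hsub m hm)

end SubOnePow

theorem tlog_apply_mem (p : ℕ) [Fact p.Prime] {M : Type*} [AddCommGroup M] [Module ℤ_[p] M]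
    {f : Module.End ℤ_[p] M} {U N : Submodule ℤ_[p] M} (hU : ∀ m ∈ U, f m ∈ U)
    (hN : ∀ m ∈ U, f m - m ∈ N) {m : M} (hm : m ∈ U) : tlog p f m ∈ N := by
  rw [tlog, LinearMap.sum_apply]
  refine Submodule.sum_mem _ fun k hk => ?_
  rw [LinearMap.smul_apply]
  exact Submodule.smul_mem _ _ <|
    Module.End.sub_one_pow_apply_mem hU hN (Nat.one_le_iff_ne_zero.mp (Finset.mem_Icc.mp hk).1) hm

section GroupAction

variable {p : ℕ} [Fact p.Prime] {M G : Type*} [AddCommGroup M] [Module ℤ_[p] M] [Group G]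
  (φ : G →* (M ≃ₗ[ℤ_[p]] M))

theorem sub_mem_grBr {U : Submodule ℤ_[p] M} (g : G) {m : M} (hm : m ∈ U) :
    m - φ g m ∈ grBr p φ U :=
  Submodule.subset_span ⟨g, m, hm, rfl⟩

theorem map_mem_grBr (U : Submodule ℤ_[p] M) (h : G) {m : M} (hm : m ∈ grBr p φ U) :
    φ h m ∈ grBr p φ U := by
  induction hm using Submodule.span_induction with
  | mem x hx =>
    obtain ⟨k, m, hm, rfl⟩ := hx
    have hcomm : φ h (m - φ k m) = (m - φ (h * k) m) - (m - φ h m) := by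
      rw [map_sub, map_mul, LinearEquiv.mul_apply]
      abel
    rw [hcomm]
    exact sub_mem (sub_mem_grBr φ _ hm) (sub_mem_grBr φ _ hm)
  | zero => simp
  | add x y _ _ hx hy => simpa using add_mem hx hy
  | smul a x _ hx => simpa using Submodule.smul_mem _ a hx

theorem map_mem_grIter (i : ℕ) (g : G) {m : M} (hm : m ∈ grIter p φ i) :
    φ g m ∈ grIter p φ i := by
  cases i with
  | zero => trivial
  | succ i => exact map_mem_grBr φ _ g hm

theorem tlog_apply_mem_grBr {U : Submodule ℤ_[p] M} (hU : ∀ g : G, ∀ m ∈ U, φ g m ∈ U)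
    (g : G) {m : M} (hm : m ∈ U) : tlog p (φ g).toLinearMap m ∈ grBr p φ U :=
  tlog_apply_mem p (hU g) (fun m hm => by simpa using neg_mem (sub_mem_grBr φ g hm)) hm

theorem logBr_le_grBr {U V : Submodule ℤ_[p] M} (hU : ∀ g : G, ∀ m ∈ U, φ g m ∈ U)
    (hVU : V ≤ U) : logBr p φ V ≤ grBr p φ U := by
  rw [logBr, Submodule.span_le]
  rintro x ⟨g, m, hm, rfl⟩
  exact tlog_apply_mem_grBr φ hU g (hVU hm)

theorem logIter_le_grIter : ∀ i, logIter p φ i ≤ grIter p φ i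
  | 0 => le_rfl
  | i + 1 => logBr_le_grBr φ (map_mem_grIter φ i) (logIter_le_grIter i)

end GroupAction

theorem stmt6_general {p : ℕ} [Fact p.Prime] {M G : Type*} [AddCommGroup M] [Module ℤ_[p] M] [Group G]
    (φ : G →* (M ≃ₗ[ℤ_[p]] M)) :
    (∀ U : Submodule ℤ_[p] M, (∀ g : G, ∀ m ∈ U, φ g m ∈ U) →
      ∀ g : G, ∀ m ∈ U, tlog p (φ g).toLinearMap m ∈ grBr p φ U) ∧
    (∀ i : ℕ, 1 ≤ i → logIter p φ i ≤ grIter p φ i) :=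
  ⟨fun _ hU g _ hm => tlog_apply_mem_grBr φ hU g hm, fun i _ => logIter_le_grIter φ i⟩

/-- For a group action of length `d < p`: `log(φ)(g)(U) ⊆ [U, G]` for every invariant
submodule `U`, and consequently `[M, _i log(G)] ⊆ [M, _i G]` for all `i ≥ 1`. -/
theorem stmt6 {p : ℕ} [Fact p.Prime] {M G : Type*} [AddCommGroup M] [Module ℤ_[p] M] [Group G]
    (φ : G →* (M ≃ₗ[ℤ_[p]] M)) (d : ℕ) (hd : d < p) (h : grIter p φ d = ⊥) :
    (∀ U : Submodule ℤ_[p] M, (∀ g : G, ∀ m ∈ U, φ g m ∈ U) →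
      ∀ g : G, ∀ m ∈ U, tlog p (φ g).toLinearMap m ∈ grBr p φ U) ∧
    (∀ i : ℕ, 1 ≤ i → logIter p φ i ≤ grIter p φ i) :=
  stmt6_general φ
end

section
/- Let M be a Z_p-module, φ: G → Aut(M) an action of a group G on M with action length d < p. Then the set of invariants {m ∈ M : φ(g)(m) = m for all g ∈ G} equals {m ∈ M : log(φ)(g)(m) = 0 for all g ∈ G}, where log(φ)(g) = Σ_{k=1}^{p-1}(-1)^{k+1}(φ(g)-id)^k/k. In other words, H^0 of the group action equals H^0 of the associated Lie action. -/
open Finset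

lemma sum_Icc_smul_pow_eq_mul {R A : Type*} [CommRing R] [Ring A] [Algebra R A]
    (c : ℕ → R) (hc : c 1 = 1) {n : ℕ} (hn : 1 ≤ n) (N : A) :
    ∑ k ∈ Icc 1 n, c k • N ^ k = (1 + N * ∑ k ∈ Icc 2 n, c k • N ^ (k - 2)) * N := by
  have hsplit : Icc 1 n = insert 1 (Icc 2 n) := by
    ext k
    simp only [mem_Icc, mem_insert]
    omega
  rw [hsplit, sum_insert (by simp), hc, one_smul, pow_one, add_mul, one_mul, mul_assoc,
    sum_mul, mul_sum]
  congr 1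
  refine sum_congr rfl fun k hk => ?_
  rw [smul_mul_assoc, mul_smul_comm, ← pow_succ, ← pow_succ']
  congr 2
  have := (mem_Icc.mp hk).1
  omega

lemma exists_isUnit_mul_eq_sum_Icc_smul_pow {R A : Type*} [CommRing R] [Ring A] [Algebra R A]
    (c : ℕ → R) (hc : c 1 = 1) {n : ℕ} (hn : 1 ≤ n) {N : A} (hN : IsNilpotent N) :
    ∃ u : A, IsUnit u ∧ ∑ k ∈ Icc 1 n, c k • N ^ k = u * N := by
  refine ⟨_, ?_, sum_Icc_smul_pow_eq_mul c hc hn N⟩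
  have hcomm : Commute N (∑ k ∈ Icc 2 n, c k • N ^ (k - 2)) :=
    Commute.sum_right _ _ _ fun k _ => ((Commute.refl N).pow_right _).smul_right _
  exact (hcomm.isNilpotent_mul_right hN).isUnit_one_add

lemma tlog_apply_eq_zero_iff {p : ℕ} [Fact p.Prime] {M : Type*} [AddCommGroup M]
    [Module ℤ_[p] M] {g : Module.End ℤ_[p] M} (hg : IsNilpotent (g - 1)) (m : M) :
    tlog p g m = 0 ↔ g m = m := by
  have hp : 1 ≤ p - 1 := Nat.le_sub_one_of_lt (Fact.out : p.Prime).one_lt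
  obtain ⟨u, hu, heq⟩ := exists_isUnit_mul_eq_sum_Icc_smul_pow
    (fun k => (-1 : ℤ_[p]) ^ (k + 1) * Ring.inverse (k : ℤ_[p])) (by simp) hp hg
  have hinj : Function.Injective u := ((Module.End.isUnit_iff u).mp hu).injective
  rw [tlog, heq, Module.End.mul_apply, map_eq_zero_iff u hinj, LinearMap.sub_apply,
    Module.End.one_apply, sub_eq_zero]

lemma sub_one_pow_apply_mem_grIter {p : ℕ} [Fact p.Prime] {M G : Type*} [AddCommGroup M]
    [Module ℤ_[p] M] [Group G] (φ : G →* (M ≃ₗ[ℤ_[p]] M)) (g : G) :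
    ∀ (i : ℕ) (x : M), (((φ g).toLinearMap - 1) ^ i) x ∈ grIter p φ i
  | 0, _ => Submodule.mem_top
  | i + 1, x => by
    rw [pow_succ', Module.End.mul_apply, LinearMap.sub_apply, Module.End.one_apply, ← neg_sub]
    exact neg_mem (Submodule.subset_span ⟨g, _, sub_one_pow_apply_mem_grIter φ g i x, rfl⟩)

lemma isNilpotent_sub_one_of_grIter_eq_bot {p : ℕ} [Fact p.Prime] {M G : Type*}
    [AddCommGroup M] [Module ℤ_[p] M] [Group G] {φ : G →* (M ≃ₗ[ℤ_[p]] M)} {d : ℕ}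
    (h : grIter p φ d = ⊥) (g : G) : IsNilpotent ((φ g).toLinearMap - 1) :=
  ⟨d, LinearMap.ext fun x => by simpa [h] using sub_one_pow_apply_mem_grIter φ g d x⟩

theorem stmt9_general {p : ℕ} [Fact p.Prime] {M G : Type*} [AddCommGroup M] [Module ℤ_[p] M] [Group G]
    (φ : G →* (M ≃ₗ[ℤ_[p]] M)) (d : ℕ) (h : grIter p φ d = ⊥) :
    {m : M | ∀ g : G, φ g m = m} = {m : M | ∀ g : G, tlog p (φ g).toLinearMap m = 0} := by
  ext m
  exact forall_congr' fun g =>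
    (tlog_apply_eq_zero_iff (isNilpotent_sub_one_of_grIter_eq_bot h g) m).symm

/-- For a group action of length `d < p`, the group invariants coincide with the Lie
invariants of the associated `log` action:  `H⁰(G,M) = H⁰(log G, M)`. -/
theorem stmt9 {p : ℕ} [Fact p.Prime] {M G : Type*} [AddCommGroup M] [Module ℤ_[p] M] [Group G]
    (φ : G →* (M ≃ₗ[ℤ_[p]] M)) (d : ℕ) (hd : d < p) (h : grIter p φ d = ⊥) :
    {m : M | ∀ g : G, φ g m = m} = {m : M | ∀ g : G, tlog p (φ g).toLinearMap m = 0} :=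
  stmt9_general φ d h
end
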